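/- Poisson summation formula for the symplectic Fourier transform: for every subgroup Λ of ZMod N × ZMod N and every function F : ZMod N × ZMod N → ℂ, ∑_{λ ∈ Λ} (F_s F)(λ) = (|Λ|/N) · ∑_{μ ∈ Λ°} F(μ), where |Λ| is the cardinality of Λ. -/
import Mathlib


open Complex Finset

/-- The symplectic Fourier transform on `ℂ^{ZMod N × ZMod N}`:
`F_s F(k,r) = N⁻¹ ∑_{(l,s)} e^{2πi·(lr−ks)/N} · F(l,s)`. -/
noncomputable def sympFourier (N : ℕ) [NeZero N] (F : ZMod N × ZMod N → ℂ) :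
    ZMod N × ZMod N → ℂ :=
  fun p => (N : ℂ)⁻¹ * ∑ q : ZMod N × ZMod N,
    Complex.exp (2 * Real.pi * Complex.I * (((q.1 * p.2 - p.1 * q.2).val : ℂ) / (N : ℂ))) * F q

/-- The adjoint subgroup `Λ° = {(k,r) : l·r − k·s = 0 in ZMod N for all (l,s) ∈ Λ}`,
as a set. -/
def adjSet {N : ℕ} (Λ : AddSubgroup (ZMod N × ZMod N)) : Set (ZMod N × ZMod N) :=
  {p | ∀ q ∈ Λ, q.1 * p.2 - p.1 * q.2 = 0}

noncomputable def eN (N : ℕ) (x : ZMod N) : ℂ :=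
  Complex.exp (2 * Real.pi * Complex.I * ((x.val : ℂ) / (N : ℂ)))

lemma eN_eq_pow (N : ℕ) (x : ZMod N) :
    eN N x = Complex.exp (2 * Real.pi * Complex.I / N) ^ x.val := by
  rw [eN, ← Complex.exp_nat_mul]
  ring_nf

lemma zeta_pow_N (N : ℕ) [NeZero N] :
    Complex.exp (2 * Real.pi * Complex.I / N) ^ N = 1 := by
  rw [← Complex.exp_nat_mul]
  have hN : (N : ℂ) ≠ 0 := Nat.cast_ne_zero.2 (NeZero.ne N)
  have h : (N : ℂ) * (2 * Real.pi * Complex.I / N) = 2 * Real.pi * Complex.I := by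
    field_simp
  rw [h, Complex.exp_two_pi_mul_I]

lemma zeta_pow_mod (N : ℕ) [NeZero N] (a : ℕ) :
    Complex.exp (2 * Real.pi * Complex.I / N) ^ (a % N)
      = Complex.exp (2 * Real.pi * Complex.I / N) ^ a := by
  conv_rhs => rw [← Nat.mod_add_div a N]
  rw [pow_add, pow_mul, zeta_pow_N, one_pow, mul_one]

lemma eN_add (N : ℕ) [NeZero N] (x y : ZMod N) :
    eN N (x + y) = eN N x * eN N y := by
  rw [eN_eq_pow, eN_eq_pow, eN_eq_pow, ← pow_add, ZMod.val_add, zeta_pow_mod]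

lemma eN_zero (N : ℕ) [NeZero N] : eN N 0 = 1 := by
  simp [eN, ZMod.val_zero]

lemma eN_eq_one_iff (N : ℕ) [NeZero N] (x : ZMod N) : eN N x = 1 ↔ x = 0 := by
  constructor
  · intro h
    rw [eN, Complex.exp_eq_one_iff] at h
    obtain ⟨n, hn⟩ := h
    have h2 : (2 * Real.pi * Complex.I : ℂ) ≠ 0 := by
      simp [Real.pi_ne_zero, Complex.I_ne_zero]
    have hx : ((x.val : ℂ) / N) = n := by
      have : 2 * Real.pi * Complex.I * ((x.val : ℂ) / N)
          = 2 * Real.pi * Complex.I * n := by rw [hn]; ring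
      exact mul_left_cancel₀ h2 this
    have hN : (N : ℂ) ≠ 0 := Nat.cast_ne_zero.2 (NeZero.ne N)
    have hx2 : (x.val : ℂ) = n * N := by rw [div_eq_iff hN] at hx; exact hx
    have hx3 : (x.val : ℤ) = n * N := by exact_mod_cast hx2
    have hlt : x.val < N := ZMod.val_lt x
    have hltz : (x.val : ℤ) < N := by exact_mod_cast hlt
    have hge : (0 : ℤ) ≤ (x.val : ℤ) := Int.ofNat_nonneg _
    have hNpos : (0 : ℤ) < N := by exact_mod_cast Nat.pos_of_ne_zero (NeZero.ne N)
    have hn0 : n = 0 := by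
      rcases lt_trichotomy n 0 with h | h | h
      · nlinarith
      · exact h
      · nlinarith
    have hv : (x.val : ℤ) = 0 := by rw [hn0, zero_mul] at hx3; exact hx3
    have : x.val = 0 := by exact_mod_cast hv
    exact (ZMod.val_eq_zero x).1 this
  · intro h; rw [h, eN_zero]

open scoped Classical in
lemma orth_sum (N : ℕ) [NeZero N] (Λ : AddSubgroup (ZMod N × ZMod N))
    (q : ZMod N × ZMod N) :
    ∑ lam ∈ Set.Finite.toFinset (Set.toFinite (Λ : Set (ZMod N × ZMod N))),
        eN N (q.1 * lam.2 - lam.1 * q.2)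
      = if q ∈ adjSet Λ then
          ((Set.Finite.toFinset (Set.toFinite (Λ : Set (ZMod N × ZMod N)))).card : ℂ)
        else 0 := by
  set Λf := Set.Finite.toFinset (Set.toFinite (Λ : Set (ZMod N × ZMod N))) with hΛf
  have hmem : ∀ x, x ∈ Λf ↔ x ∈ Λ := by
    intro x; rw [hΛf, Set.Finite.mem_toFinset]; exact Iff.rfl
  by_cases hq : q ∈ adjSet Λ
  · rw [if_pos hq]
    rw [Finset.sum_congr rfl (fun lam hl => ?_), Finset.sum_const, nsmul_eq_mul, mul_one]
    have h0 : lam.1 * q.2 - q.1 * lam.2 = 0 := hq lam ((hmem lam).1 hl)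
    have : q.1 * lam.2 - lam.1 * q.2 = 0 := by linear_combination -h0
    rw [this, eN_zero]
  · rw [if_neg hq]
    simp only [adjSet, Set.mem_setOf_eq, not_forall] at hq
    obtain ⟨l0, hl0, hc⟩ := hq
    set c : ZMod N × ZMod N → ZMod N := fun lam => q.1 * lam.2 - lam.1 * q.2 with hcdef
    have hc0 : c l0 ≠ 0 := by
      intro h
      apply hc
      have : q.1 * l0.2 - l0.1 * q.2 = 0 := h
      linear_combination -this
    have hadd : ∀ a b, c (a + b) = c a + c b := by
      intro a b; simp only [hcdef, Prod.fst_add, Prod.snd_add]; ring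
    set S := ∑ lam ∈ Λf, eN N (c lam) with hS
    have key : eN N (c l0) * S = S := by
      rw [hS, Finset.mul_sum]
      refine Finset.sum_equiv (Equiv.addLeft l0) (fun i => ?_) (fun i hi => ?_)
      · simp only [Equiv.coe_addLeft, hmem]
        constructor
        · intro h; exact Λ.add_mem hl0 h
        · intro h
          have := Λ.add_mem (Λ.neg_mem hl0) h
          simpa using this
      · simp only [Equiv.coe_addLeft]
        rw [hadd, eN_add]
    have : (eN N (c l0) - 1) * S = 0 := by linear_combination key
    rcases mul_eq_zero.1 this with h | h
    · exact absurd ((eN_eq_one_iff N (c l0)).1 (by linear_combination h)) hc0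
    · exact h

/-- **Poisson summation formula for the symplectic Fourier transform**: for every subgroup
`Λ` of `ZMod N × ZMod N` and every `F : ZMod N × ZMod N → ℂ`,
`∑_{λ∈Λ} (F_s F)(λ) = (|Λ|/N) · ∑_{μ∈Λ°} F(μ)`. -/
theorem symplectic_poisson_summation (N : ℕ) [NeZero N]
    (Λ : AddSubgroup (ZMod N × ZMod N)) (F : ZMod N × ZMod N → ℂ) :
    ∑ lam ∈ Set.Finite.toFinset (Set.toFinite (Λ : Set (ZMod N × ZMod N))),
        sympFourier N F lam
      = ((Set.Finite.toFinset (Set.toFinite (Λ : Set (ZMod N × ZMod N)))).card : ℂ) / (N : ℂ) *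
          ∑ mu ∈ Set.Finite.toFinset (Set.toFinite (adjSet Λ)), F mu := by
  classical
  set Λf := Set.Finite.toFinset (Set.toFinite (Λ : Set (ZMod N × ZMod N))) with hΛf
  set adjF := Set.Finite.toFinset (Set.toFinite (adjSet Λ)) with hadjF
  have h1 : ∀ lam, sympFourier N F lam
      = (N : ℂ)⁻¹ * ∑ q : ZMod N × ZMod N, eN N (q.1 * lam.2 - lam.1 * q.2) * F q :=
    fun lam => rfl
  simp only [h1]
  rw [← Finset.mul_sum, Finset.sum_comm]
  have h2 : ∀ q : ZMod N × ZMod N,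
      ∑ lam ∈ Λf, eN N (q.1 * lam.2 - lam.1 * q.2) * F q
        = (if q ∈ adjSet Λ then (Λf.card : ℂ) else 0) * F q := by
    intro q
    rw [← Finset.sum_mul, orth_sum]
  rw [Finset.sum_congr rfl (fun q _ => h2 q)]
  have h3 : ∑ q : ZMod N × ZMod N, (if q ∈ adjSet Λ then (Λf.card : ℂ) else 0) * F q
      = (Λf.card : ℂ) * ∑ mu ∈ adjF, F mu := by
    rw [Finset.mul_sum]
    rw [show (∑ q : ZMod N × ZMod N, (if q ∈ adjSet Λ then (Λf.card : ℂ) else 0) * F q)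
        = ∑ q : ZMod N × ZMod N, (if q ∈ adjF then (Λf.card : ℂ) * F q else 0) from
      Finset.sum_congr rfl (fun q _ => by
        by_cases hq : q ∈ adjSet Λ
        · rw [if_pos hq, if_pos (by rw [hadjF, Set.Finite.mem_toFinset]; exact hq)]
        · rw [if_neg hq, if_neg (by rw [hadjF, Set.Finite.mem_toFinset]; exact hq), zero_mul])]
    rw [Finset.sum_ite_mem, Finset.univ_inter]
  rw [h3]
  ring
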